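/- Let ε > 0 and H: ℝ^k × ℝ^j → ℝ be continuously differentiable in z, satisfying for each z: w ↦ e^{−H(z,w)/ε} integrable with strictly positive integral, w ↦ ∇_zH(z,w)e^{−H(z,w)/ε} integrable, and local domination permitting differentiation under the integral sign. Let J̄ ∈ ℝ^{k×k} be skew-symmetric and D̄ ∈ ℝ^{k×k} symmetric positive semidefinite, and define the projected drift f̄(z) := (J̄ − D̄)·(∫∇_zH(z,w)e^{−H(z,w)/ε}dw / ∫e^{−H(z,w)/ε}dw). Then f̄(z) = (J̄ − D̄)∇L̄(z) for the free energy L̄(z) = −ε log ∫ e^{−H(z,w)/ε}dw, and L̄ solves the projected HJB equation f̄(z)·∇L̄(z) + (∇L̄(z))ᵀ D̄ ∇L̄(z) = 0 for every z. -/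

import Mathlib

open Matrix MeasureTheory

/-- The continuous linear map `v ↦ a ⬝ᵥ v`, representing the differential of a scalar
function with gradient vector `a`. -/
noncomputable def dotCLM {n : ℕ} (a : Fin n → ℝ) : (Fin n → ℝ) →L[ℝ] ℝ :=
  LinearMap.toContinuousLinearMap
    { toFun := fun v => a ⬝ᵥ v
      map_add' := by intro v w; simp [dotProduct_add]
      map_smul' := by intro c v; simp [dotProduct_smul] }

/-!
Differentiating under the integral sign, the partition function `Z(z) = ∫ e^{-H(z,w)/ε} dw` has
gradient `-ε⁻¹ ∫ e^{-H/ε} ∇_zH`, so `∇L̄ = -ε ∇Z / Z` is the Gibbs average of `∇_zH` and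
`f̄ = (J̄ - D̄)∇L̄`. The HJB identity is then algebraic: `J̄g ⬝ g = 0` by skew-symmetry, and the
two friction terms `-D̄g ⬝ g` and `g ⬝ D̄g` cancel.
-/

open Topology

section SkewQuadraticForm

variable {R n : Type*} [CommRing R] [NoZeroDivisors R] [CharZero R] [Fintype n]
  {J : Matrix n n R}

theorem dotProduct_mulVec_self_eq_zero_of_transpose_eq_neg (hJ : Jᵀ = -J) (g : n → R) :
    J *ᵥ g ⬝ᵥ g = 0 := by
  refine CharZero.eq_neg_self_iff.mp ?_
  calc J *ᵥ g ⬝ᵥ g = g ᵥ* J ⬝ᵥ g := by rw [dotProduct_comm, dotProduct_mulVec]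
    _ = Jᵀ *ᵥ g ⬝ᵥ g := by rw [mulVec_transpose]
    _ = -(J *ᵥ g ⬝ᵥ g) := by rw [hJ, neg_mulVec, neg_dotProduct]

theorem sub_mulVec_dotProduct_add_dotProduct_mulVec_eq_zero (hJ : Jᵀ = -J) (D : Matrix n n R)
    (g : n → R) : (J - D) *ᵥ g ⬝ᵥ g + g ⬝ᵥ D *ᵥ g = 0 := by
  rw [sub_mulVec, sub_dotProduct, dotProduct_mulVec_self_eq_zero_of_transpose_eq_neg hJ,
    dotProduct_comm g]
  ring

end SkewQuadraticForm

section Gradient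

variable {k : ℕ}

lemma dotCLM_apply (a v : Fin k → ℝ) : dotCLM a v = a ⬝ᵥ v := rfl

lemma dotCLM_injective : Function.Injective (dotCLM (n := k)) := by
  intro a b hab
  funext i
  simpa [dotCLM_apply, dotProduct_single] using DFunLike.congr_fun hab (Pi.single i 1)

noncomputable def dotSL (k : ℕ) : (Fin k → ℝ) →L[ℝ] (Fin k → ℝ) →L[ℝ] ℝ :=
  LinearMap.toContinuousLinearMap
    (LinearMap.toContinuousLinearMap.toLinearMap ∘ₗ dotProductBilin ℝ ℝ)

lemma dotSL_apply (a : Fin k → ℝ) : dotSL k a = dotCLM a := rfl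

theorem HasFDerivAt.exp_neg_div {E : Type*} [NormedAddCommGroup E] [NormedSpace ℝ E]
    {f : E → ℝ} {f' : E →L[ℝ] ℝ} {x : E} (hf : HasFDerivAt f f' x) (ε : ℝ) :
    HasFDerivAt (fun y => Real.exp (-f y / ε)) (-(ε⁻¹ * Real.exp (-f x / ε)) • f') x := by
  have hdiv (y : E) : -f y / ε = -ε⁻¹ * f y := by ring
  simp_rw [hdiv]
  convert (hf.const_mul (-ε⁻¹)).exp using 1
  rw [smul_smul, mul_comm, neg_mul, mul_neg]

theorem hasFDerivAt_integral_exp_neg_div {α : Type*} [MeasurableSpace α] {μ : Measure α}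
    {H : (Fin k → ℝ) → α → ℝ} {gradzH : (Fin k → ℝ) → α → Fin k → ℝ} {ε : ℝ}
    {z₀ : Fin k → ℝ} {s : Set (Fin k → ℝ)} {bound : α → ℝ} (hs : s ∈ 𝓝 z₀)
    (hH : ∀ z ∈ s, ∀ w, HasFDerivAt (H · w) (dotCLM (gradzH z w)) z)
    (hmeas : ∀ z, AEStronglyMeasurable (fun w => Real.exp (-H z w / ε)) μ)
    (hint : Integrable (fun w => Real.exp (-H z₀ w / ε)) μ)
    (hintgrad : Integrable (fun w => Real.exp (-H z₀ w / ε) • gradzH z₀ w) μ)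
    (hbound_int : Integrable bound μ)
    (hbound : ∀ z ∈ s, ∀ w, ‖(ε⁻¹ * Real.exp (-H z w / ε)) • gradzH z w‖ ≤ bound w) :
    HasFDerivAt (fun z => ∫ w, Real.exp (-H z w / ε) ∂μ)
      (dotCLM (-ε⁻¹ • ∫ w, Real.exp (-H z₀ w / ε) • gradzH z₀ w ∂μ)) z₀ := by
  set F' : (Fin k → ℝ) → α → (Fin k → ℝ) →L[ℝ] ℝ :=
    fun z w => dotSL k (-(ε⁻¹ • Real.exp (-H z w / ε) • gradzH z w))
  have hF'_bound : ∀ z ∈ s, ∀ w, ‖F' z w‖ ≤ ‖dotSL k‖ * bound w := fun z hz w => by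
    refine (ContinuousLinearMap.le_opNorm _ _).trans ?_
    rw [norm_neg, ← mul_smul]
    exact mul_le_mul_of_nonneg_left (hbound z hz w) (norm_nonneg _)
  have hF'_deriv : ∀ z ∈ s, ∀ w, HasFDerivAt (fun z => Real.exp (-H z w / ε)) (F' z w) z :=
    fun z hz w => by
      refine ((hH z hz w).exp_neg_div ε).congr_fderiv ?_
      -- `ext`, not `rw`: the type of `dotCLM` carries the non-normed `Pi` instances
      ext v
      simp [F', dotSL_apply, dotCLM_apply, mul_assoc]
  have hF'_integral :
      ∫ w, F' z₀ w ∂μ = dotCLM (-ε⁻¹ • ∫ w, Real.exp (-H z₀ w / ε) • gradzH z₀ w ∂μ) := by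
    have hint' : Integrable (fun w => -(ε⁻¹ • Real.exp (-H z₀ w / ε) • gradzH z₀ w)) μ :=
      (hintgrad.smul ε⁻¹).neg
    rw [ContinuousLinearMap.integral_comp_comm _ hint', integral_neg,
      integral_smul, neg_smul, dotSL_apply]
  rw [← hF'_integral]
  exact hasFDerivAt_integral_of_dominated_of_fderiv_le hs (.of_forall hmeas) hint
    ((dotSL k).continuous.comp_aestronglyMeasurable
      (hintgrad.aestronglyMeasurable.const_smul ε⁻¹).neg)
    (.of_forall fun w z hz => hF'_bound z hz w) (hbound_int.const_mul _)
    (.of_forall fun w z hz => hF'_deriv z hz w)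

theorem HasFDerivAt.neg_mul_log_of_neg_inv_smul {Z : (Fin k → ℝ) → ℝ} {I z : Fin k → ℝ} {ε : ℝ}
    (hε : ε ≠ 0) (hZ : HasFDerivAt Z (dotCLM (-ε⁻¹ • I)) z) (hZz : Z z ≠ 0) :
    HasFDerivAt (fun z => -ε * Real.log (Z z)) (dotCLM ((Z z)⁻¹ • I)) z := by
  refine ((hZ.log hZz).const_mul (-ε)).congr_fderiv ?_
  ext v
  simp [dotCLM_apply, smul_dotProduct]
  field_simp

end Gradient

theorem free_energy_solves_projected_HJB_general
    (k j : ℕ) (ε : ℝ) (hε : 0 < ε)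
    (H : (Fin k → ℝ) → (Fin j → ℝ) → ℝ)
    (gradzH : (Fin k → ℝ) → (Fin j → ℝ) → (Fin k → ℝ))
    -- `H` is continuously differentiable in `z` with `z`-gradient `gradzH`:
    (hH : ∀ z w, HasFDerivAt (fun z' => H z' w) (dotCLM (gradzH z w)) z)
    -- `w ↦ e^{-H(z,w)/ε}` is integrable with strictly positive integral:
    (hint : ∀ z, Integrable fun w => Real.exp (-H z w / ε))
    (hpos : ∀ z, 0 < ∫ w, Real.exp (-H z w / ε))
    -- `w ↦ ∇_zH(z,w) e^{-H(z,w)/ε}` is integrable: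
    (hintgrad : ∀ z, Integrable fun w => Real.exp (-H z w / ε) • gradzH z w)
    -- locally in `z`, the functions `w ↦ ∇_z(e^{-H(z,w)/ε})` admit an integrable
    -- dominating function:
    (hdom : ∀ z₀ : Fin k → ℝ, ∃ δ > 0, ∃ bound : (Fin j → ℝ) → ℝ,
      Integrable bound ∧ ∀ z ∈ Metric.ball z₀ δ, ∀ w,
        ‖(ε⁻¹ * Real.exp (-H z w / ε)) • gradzH z w‖ ≤ bound w)
    -- structure and friction blocks of the resolved variables:
    (Jbar Dbar : Matrix (Fin k) (Fin k) ℝ)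
    (hJbar : Jbarᵀ = -Jbar)
    -- the projected drift: the Gibbs conditional average of the `z`-drift
    (fbar : (Fin k → ℝ) → (Fin k → ℝ))
    (hfbar : fbar = fun z => (Jbar - Dbar) *ᵥ
      ((∫ w, Real.exp (-H z w / ε))⁻¹ • ∫ w, Real.exp (-H z w / ε) • gradzH z w))
    -- the free energy `L̄` and its gradient `gradLbar`:
    (Lbar : (Fin k → ℝ) → ℝ)
    (hLbar : Lbar = fun z => -ε * Real.log (∫ w, Real.exp (-H z w / ε)))
    (gradLbar : (Fin k → ℝ) → (Fin k → ℝ))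
    (hgradLbar : ∀ z, HasFDerivAt Lbar (dotCLM (gradLbar z)) z) :
    ∀ z, fbar z = (Jbar - Dbar) *ᵥ gradLbar z ∧
      fbar z ⬝ᵥ gradLbar z + gradLbar z ⬝ᵥ (Dbar *ᵥ gradLbar z) = 0 := by
  intro z
  obtain ⟨δ, hδ, bound, hbound_int, hbound⟩ := hdom z
  have hZ := hasFDerivAt_integral_exp_neg_div (Metric.ball_mem_nhds z hδ)
    (fun z _ w => hH z w) (fun z => (hint z).aestronglyMeasurable) (hint z) (hintgrad z)
    hbound_int hbound
  have hL := hLbar ▸ hZ.neg_mul_log_of_neg_inv_smul hε.ne' (hpos z).ne'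
  have hgrad := dotCLM_injective ((hgradLbar z).unique hL)
  have hf : fbar z = (Jbar - Dbar) *ᵥ gradLbar z := by rw [hfbar, hgrad]
  exact ⟨hf, hf ▸ sub_mulVec_dotProduct_add_dotProduct_mulVec_eq_zero hJbar Dbar _⟩

/-- The projected drift `f̄(z) = (J̄-D̄)·⟨∇_zH⟩_z` (Gibbs conditional average) equals
`(J̄-D̄)∇L̄(z)` for the free energy `L̄(z) = -ε log ∫ e^{-H(z,w)/ε} dw`, and `L̄` solves the
projected HJB equation `f̄·∇L̄ + (∇L̄)ᵀD̄∇L̄ = 0`. -/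
theorem free_energy_solves_projected_HJB
    (k j : ℕ) (ε : ℝ) (hε : 0 < ε)
    (H : (Fin k → ℝ) → (Fin j → ℝ) → ℝ)
    (gradzH : (Fin k → ℝ) → (Fin j → ℝ) → (Fin k → ℝ))
    -- `H` is continuously differentiable in `z` with `z`-gradient `gradzH`:
    (hH : ∀ z w, HasFDerivAt (fun z' => H z' w) (dotCLM (gradzH z w)) z)
    (hHC1 : ∀ w, Continuous fun z => gradzH z w)
    -- `w ↦ e^{-H(z,w)/ε}` is integrable with strictly positive integral:
    (hint : ∀ z, Integrable fun w => Real.exp (-H z w / ε))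
    (hpos : ∀ z, 0 < ∫ w, Real.exp (-H z w / ε))
    -- `w ↦ ∇_zH(z,w) e^{-H(z,w)/ε}` is integrable:
    (hintgrad : ∀ z, Integrable fun w => Real.exp (-H z w / ε) • gradzH z w)
    -- locally in `z`, the functions `w ↦ ∇_z(e^{-H(z,w)/ε})` admit an integrable
    -- dominating function:
    (hdom : ∀ z₀ : Fin k → ℝ, ∃ δ > 0, ∃ bound : (Fin j → ℝ) → ℝ,
      Integrable bound ∧ ∀ z ∈ Metric.ball z₀ δ, ∀ w,
        ‖(ε⁻¹ * Real.exp (-H z w / ε)) • gradzH z w‖ ≤ bound w)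
    -- structure and friction blocks of the resolved variables:
    (Jbar Dbar : Matrix (Fin k) (Fin k) ℝ)
    (hJbar : Jbarᵀ = -Jbar) (hDbar : Dbar.PosSemidef)
    -- the projected drift: the Gibbs conditional average of the `z`-drift
    (fbar : (Fin k → ℝ) → (Fin k → ℝ))
    (hfbar : fbar = fun z => (Jbar - Dbar) *ᵥ
      ((∫ w, Real.exp (-H z w / ε))⁻¹ • ∫ w, Real.exp (-H z w / ε) • gradzH z w))
    -- the free energy `L̄` and its gradient `gradLbar`:
    (Lbar : (Fin k → ℝ) → ℝ)
    (hLbar : Lbar = fun z => -ε * Real.log (∫ w, Real.exp (-H z w / ε)))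
    (gradLbar : (Fin k → ℝ) → (Fin k → ℝ))
    (hgradLbar : ∀ z, HasFDerivAt Lbar (dotCLM (gradLbar z)) z) :
    ∀ z, fbar z = (Jbar - Dbar) *ᵥ gradLbar z ∧
      fbar z ⬝ᵥ gradLbar z + gradLbar z ⬝ᵥ (Dbar *ᵥ gradLbar z) = 0 :=
  free_energy_solves_projected_HJB_general k j ε hε H gradzH hH hint hpos hintgrad hdom Jbar Dbar
    hJbar fbar hfbar Lbar hLbar gradLbar hgradLbar
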